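/- (W₁-stability of the minimizer) Let λ > 0, M ∈ (0,∞), and let μ, μ̃ be Borel probability measures on ℝ^d with supp μ, supp μ̃ ⊂ B_M(0). Then for every 1-optimal transport plan π from μ to μ̃, writing its disintegration over the first coordinate as dπ(x,x̃) = dν(x̃ | x) dμ(x), one has ∫ | u_{μ,λ}(x) − ∫ u_{μ̃,λ}(x̃) dν(x̃ | x) |² dμ(x) ≤ 16 M · W₁(μ, μ̃). -/

import Mathlib

open MeasureTheory Filter Topology ProbabilityTheory
open scoped ENNReal NNReal symmDiff Classical RealInnerProductSpace

noncomputable section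

/-- `d`-dimensional Euclidean space. -/
abbrev Euc (d : ℕ) : Type := EuclideanSpace ℝ (Fin d)

/-- The sum-of-norms clustering functional
`J_{μ,λ}(u) = ∫ |u x - x|² dμ + λ ∬ |u x - u y| dμ dμ`. -/
def SONJ {d : ℕ} (μ : Measure (Euc d)) (lam : ℝ) (u : Euc d → Euc d) : ℝ :=
  ∫ x, ‖u x - x‖ ^ 2 ∂μ + lam * ∫ x, ∫ y, ‖u x - u y‖ ∂μ ∂μ

/-- `u` is a minimizer of `J_{μ,λ}` over `L²(μ; ℝ^d)`.  Since `J_{μ,λ}` has a unique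
minimizer (up to `μ`-a.e. equality), this predicate characterizes `u_{μ,λ}`. -/
def IsSONMin {d : ℕ} (μ : Measure (Euc d)) (lam : ℝ) (u : Euc d → Euc d) : Prop :=
  MemLp u 2 μ ∧ ∀ v : Euc d → Euc d, MemLp v 2 μ → SONJ μ lam u ≤ SONJ μ lam v

/-- `μ` is `λ`-cohesive: the minimizer of `J_{μ,λ}` is `μ`-a.e. constant. -/
def Cohesive {d : ℕ} (μ : Measure (Euc d)) (lam : ℝ) : Prop :=
  ∃ u : Euc d → Euc d, IsSONMin μ lam u ∧ ∃ c : Euc d, u =ᵐ[μ] fun _ => c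

/-- `μ` is `λ`-shattered: the minimizer of `J_{μ,λ}` agrees `μ`-a.e. with a measurable
injection. -/
def Shattered {d : ℕ} (μ : Measure (Euc d)) (lam : ℝ) : Prop :=
  ∃ u : Euc d → Euc d, IsSONMin μ lam u ∧
    ∃ v : Euc d → Euc d, Measurable v ∧ Function.Injective v ∧ u =ᵐ[μ] v

/-- `λ₁(μ) = inf {λ ≥ 0 | μ is λ-cohesive}`. -/
def lambda1 {d : ℕ} (μ : Measure (Euc d)) : ℝ :=
  sInf {lam : ℝ | 0 ≤ lam ∧ Cohesive μ lam}

/-- `λ⋆(μ) = sup {λ ≥ 0 | μ is λ-shattered}`. -/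
def lambdaStar {d : ℕ} (μ : Measure (Euc d)) : ℝ :=
  sSup {lam : ℝ | 0 ≤ lam ∧ Shattered μ lam}

/-- The level set (cluster) of `u` containing `x`: `V_{u,x} = u⁻¹({u x})`. -/
def Vset {d : ℕ} (u : Euc d → Euc d) (x : Euc d) : Set (Euc d) := {y | u y = u x}

/-- The `μ`-centroid of a set `V`: the `μ`-average of `V` if `μ V > 0`, and the unique
element of `V` if `V` is a singleton (otherwise junk). -/
def muCentroid {d : ℕ} (μ : Measure (Euc d)) (V : Set (Euc d)) : Euc d :=
  if 0 < μ V then (μ V).toReal⁻¹ • ∫ x in V, x ∂μ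
  else if h : ∃ x, V = {x} then h.choose else 0

/-- The first canonical basis vector of `ℝ^d`. -/
def e1 (d : ℕ) : Euc d := if h : 0 < d then EuclideanSpace.single (⟨0, h⟩ : Fin d) 1 else 0

/-- The constant `γ_d` from the paper. -/
def gammaD (d : ℕ) : ℝ :=
  ((2 * (d : ℝ) + 1) / (2 * (d : ℝ) + 4)) *
    (if Even d then
      (((d : ℝ) + 1) * ((Nat.factorial (2 * d) : ℝ)) * Real.pi) /
        (2 ^ (3 * d) * ((Nat.factorial (d / 2) : ℝ)) ^ 2 * ((Nat.factorial d : ℝ)))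
    else
      (((d : ℝ) + 1) * ((Nat.factorial ((d - 1) / 2) : ℝ)) ^ 2 *
          ((Nat.factorial (2 * d) : ℝ))) /
        (2 ^ d * ((Nat.factorial d : ℝ)) ^ 3))

/-- The union of the two open unit balls centered at `± r e₁`. -/
def ballUnion (d : ℕ) (r : ℝ) : Set (Euc d) :=
  Metric.ball (-(r • e1 d)) 1 ∪ Metric.ball (r • e1 d) 1

/-- The empirical measure `μ_N = N⁻¹ ∑_{n<N} δ_{X n ω}`. -/
def empMeas {d : ℕ} {Ω : Type*} (X : ℕ → Ω → Euc d) (N : ℕ) (ω : Ω) : Measure (Euc d) :=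
  (N : ℝ≥0∞)⁻¹ • ∑ n ∈ Finset.range N, Measure.dirac (X n ω)

/-- The `1`-Wasserstein distance (in `ℝ≥0∞`) between two measures on `ℝ^d`, as an
infimum over couplings. -/
def W1dist {d : ℕ} (μ ν : Measure (Euc d)) : ℝ≥0∞ :=
  ⨅ (π : Measure (Euc d × Euc d)) (_ : π.fst = μ ∧ π.snd = ν), ∫⁻ p, edist p.1 p.2 ∂π

/-!
Write `J = J_{μ,λ}`, `J̃ = J_{μ̃,λ}` and `V x = ∫ ũ(x̃) dν(x̃ | x)`. Both minimizers take values
in the closed ball `B_M`: projecting onto the ball does not increase `J`, while `J` is strongly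
convex, `∫ |u - v|² dμ ≤ 2 (J v - J u)` at its minimizer `u`. Averaging a map bounded by `M`
along a coupling raises the energy by at most `4 M` times the transport cost: for the fidelity
term by Jensen and `|a - x|² ≤ |a - y|² + 4 M |x - y|` on `B_M`, for the pairwise term by Jensen
in each variable. Hence `J V ≤ J̃ ũ + 4 M W₁`, and averaging `u` along the reversed plan gives a
competitor for `J̃`, so `J̃ ũ ≤ J u + 4 M W₁`. Strong convexity turns `J V - J u ≤ 8 M W₁` into
the bound `16 M W₁`.
-/

section BallProj

variable {E : Type*} [NormedAddCommGroup E] [InnerProductSpace ℝ E] {M : ℝ}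

def ballProj (M : ℝ) (z : E) : E := if ‖z‖ ≤ M then z else (M / ‖z‖) • z

lemma ballProj_of_norm_le {z : E} (hz : ‖z‖ ≤ M) : ballProj M z = z := if_pos hz

lemma norm_ballProj_le (hM : 0 ≤ M) (z : E) : ‖ballProj M z‖ ≤ M := by
  unfold ballProj
  split_ifs with hz
  · exact hz
  · have hz0 : 0 < ‖z‖ := hM.trans_lt (not_le.1 hz)
    rw [norm_smul, Real.norm_of_nonneg (div_nonneg hM hz0.le), div_mul_cancel₀ _ hz0.ne']

lemma inner_sub_ballProj_nonpos (hM : 0 ≤ M) (z : E) {a : E} (ha : ‖a‖ ≤ M) :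
    ⟪z - ballProj M z, a - ballProj M z⟫ ≤ 0 := by
  unfold ballProj
  split_ifs with hz
  · simp
  · have hz0 : 0 < ‖z‖ := hM.trans_lt (not_le.1 hz)
    set t := M / ‖z‖
    have htz : t * ‖z‖ = M := div_mul_cancel₀ _ hz0.ne'
    have ht1 : 0 ≤ 1 - t := by
      rw [sub_nonneg, div_le_one hz0]; exact (not_le.1 hz).le
    have hza : ⟪z, a⟫ ≤ ‖z‖ * M :=
      (real_inner_le_norm z a).trans (mul_le_mul_of_nonneg_left ha (norm_nonneg z))
    have hexp : ⟪z - t • z, a - t • z⟫ = (1 - t) * (⟪z, a⟫ - M * ‖z‖) := by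
      rw [← htz]
      simp only [inner_sub_left, inner_sub_right, inner_smul_left, inner_smul_right,
        real_inner_self_eq_norm_sq, RCLike.conj_to_real]
      ring
    rw [hexp]
    exact mul_nonpos_of_nonneg_of_nonpos ht1 (by linarith)

lemma norm_ballProj_sub_le (hM : 0 ≤ M) (z : E) {a : E} (ha : ‖a‖ ≤ M) :
    ‖ballProj M z - a‖ ≤ ‖z - a‖ := by
  set p := ballProj M z
  have hinner : 0 ≤ ⟪z - p, p - a⟫ := by
    have := inner_sub_ballProj_nonpos hM z ha
    rw [← neg_sub p a, inner_neg_right] at this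
    linarith
  have hsq : ‖p - a‖ ^ 2 ≤ ‖z - a‖ ^ 2 := by
    rw [show z - a = (z - p) + (p - a) by abel, norm_add_sq_real]
    nlinarith [sq_nonneg ‖z - p‖]
  exact pow_le_pow_iff_left₀ (norm_nonneg _) (norm_nonneg _) two_ne_zero |>.1 hsq

lemma norm_ballProj_sub_ballProj_le (hM : 0 ≤ M) (z w : E) :
    ‖ballProj M z - ballProj M w‖ ≤ ‖z - w‖ := by
  set p := ballProj M z
  set q := ballProj M w
  have hz := inner_sub_ballProj_nonpos hM z (norm_ballProj_le hM w)
  have hw := inner_sub_ballProj_nonpos hM w (norm_ballProj_le hM z)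
  -- adding the two variational inequalities gives `‖p - q‖² ≤ ⟪z - w, p - q⟫`
  have hsq : ‖p - q‖ ^ 2 ≤ ‖z - w‖ * ‖p - q‖ := by
    have hsum : ‖p - q‖ ^ 2 = ⟪z - w, p - q⟫ + ⟪z - p, q - p⟫ + ⟪w - q, p - q⟫ := by
      rw [← real_inner_self_eq_norm_sq, ← neg_sub p q, inner_neg_right]
      simp only [inner_sub_left]
      ring
    linarith [real_inner_le_norm (z - w) (p - q)]
  nlinarith [norm_nonneg (p - q), norm_nonneg (z - w)]

lemma continuous_ballProj (hM : 0 ≤ M) : Continuous (ballProj (E := E) M) :=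
  (LipschitzWith.mk_one fun z w => by
    simpa only [dist_eq_norm] using norm_ballProj_sub_ballProj_le hM z w).continuous

end BallProj

section CondMean

variable {α Ω E : Type*} [MeasurableSpace α] [MeasurableSpace Ω]
  [NormedAddCommGroup E] [NormedSpace ℝ E] {M : ℝ}

lemma integral_comp_snd_eq {ρ : Measure (α × Ω)} {f : Ω → E}
    (hf : AEStronglyMeasurable f ρ.snd) : ∫ p, f p.2 ∂ρ = ∫ y, f y ∂ρ.snd :=
  (integral_map measurable_snd.aemeasurable hf).symm

lemma norm_integral_sub_le [CompleteSpace E] {ν : Measure α} [IsProbabilityMeasure ν] {f : α → E}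
    (hf : Integrable f ν) (c : E) : ‖∫ x, f x ∂ν - c‖ ≤ ∫ x, ‖f x - c‖ ∂ν := by
  have hsub : ∫ x, (f x - c) ∂ν = ∫ x, f x ∂ν - c := by
    simp [integral_sub hf (integrable_const c)]
  exact hsub ▸ norm_integral_le_integral_norm _

lemma sq_norm_integral_sub_le [CompleteSpace E] {ν : Measure α} [IsProbabilityMeasure ν]
    {f : α → E} (hf : Integrable f ν) (c : E) (hf2 : Integrable (fun x => ‖f x - c‖ ^ 2) ν) :
    ‖∫ x, f x ∂ν - c‖ ^ 2 ≤ ∫ x, ‖f x - c‖ ^ 2 ∂ν :=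
  calc ‖∫ x, f x ∂ν - c‖ ^ 2 ≤ (∫ x, ‖f x - c‖ ∂ν) ^ 2 :=
        pow_le_pow_left₀ (norm_nonneg _) (norm_integral_sub_le hf c) 2
    _ ≤ ∫ x, ‖f x - c‖ ^ 2 ∂ν :=
        (even_two.convexOn_pow (𝕜 := ℝ)).map_integral_le (continuous_pow 2).continuousOn
          isClosed_univ (ae_of_all _ fun _ => Set.mem_univ _) (hf.sub (integrable_const c)).norm hf2

variable [StandardBorelSpace Ω] [Nonempty Ω] {ρ : Measure (α × Ω)} [IsFiniteMeasure ρ]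

lemma integral_integral_condKernel_eq_integral_snd {f : Ω → E} (hf : Integrable f ρ.snd) :
    ∫ x, ∫ y, f y ∂ρ.condKernel x ∂ρ.fst = ∫ y, f y ∂ρ.snd := by
  rw [Measure.integral_condKernel (f := fun p => f p.2), integral_comp_snd_eq hf.1]
  exact (integrable_map_measure hf.1 measurable_snd.aemeasurable).1 hf

/-- `condMean ρ g x` is the paper's `∫ g(x̃) dν(x̃ | x)`, for the disintegration
`dρ(x, x̃) = dν(x̃ | x) dρ.fst(x)`. -/
def condMean (ρ : Measure (α × Ω)) [IsFiniteMeasure ρ] (g : Ω → E) (x : α) : E :=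
  ∫ y, g y ∂ρ.condKernel x

lemma stronglyMeasurable_condMean {g : Ω → E} (hg : StronglyMeasurable g) :
    StronglyMeasurable (condMean ρ g) :=
  (hg.comp_measurable measurable_snd).integral_kernel_prod_right'

lemma norm_condMean_le {g : Ω → E} (hgM : ∀ y, ‖g y‖ ≤ M) (x : α) : ‖condMean ρ g x‖ ≤ M := by
  simpa [condMean] using norm_integral_le_of_norm_le_const (μ := ρ.condKernel x) (ae_of_all _ hgM)

lemma condMean_congr_ae {f g : Ω → E} (h : f =ᵐ[ρ.snd] g) :
    condMean ρ f =ᵐ[ρ.fst] condMean ρ g := by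
  have h' : ∀ᵐ p ∂ρ.fst ⊗ₘ ρ.condKernel, f p.2 = g p.2 := by
    rw [ρ.disintegrate ρ.condKernel]
    exact ae_of_ae_map measurable_snd.aemeasurable h
  filter_upwards [Measure.ae_ae_of_ae_compProd h'] with x hx
  exact integral_congr_ae hx

lemma memLp_condMean {g : Ω → E} (hg : StronglyMeasurable g) (hgM : ∀ y, ‖g y‖ ≤ M)
    (p : ℝ≥0∞) (μ : Measure α) [IsFiniteMeasure μ] : MemLp (condMean ρ g) p μ :=
  .of_bound (stronglyMeasurable_condMean hg).aestronglyMeasurable M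
    (ae_of_all _ (norm_condMean_le hgM))

lemma integral_norm_condMean_sub_le [CompleteSpace E] {g : Ω → E} (hg : StronglyMeasurable g)
    (hgM : ∀ y, ‖g y‖ ≤ M) (c : E) :
    ∫ x, ‖condMean ρ g x - c‖ ∂ρ.fst ≤ ∫ y, ‖g y - c‖ ∂ρ.snd := by
  have hgc : StronglyMeasurable fun y => ‖g y - c‖ := (hg.sub stronglyMeasurable_const).norm
  have hgcM : ∀ y, ‖‖g y - c‖‖ ≤ M + ‖c‖ := fun y => by
    rw [norm_norm]; exact (norm_sub_le _ _).trans (by linarith [hgM y])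
  calc ∫ x, ‖condMean ρ g x - c‖ ∂ρ.fst
      ≤ ∫ x, condMean ρ (fun y => ‖g y - c‖) x ∂ρ.fst :=
        integral_mono_of_nonneg (ae_of_all _ fun _ => norm_nonneg _)
          ((memLp_condMean hgc hgcM 1 _).integrable le_rfl)
          (ae_of_all _ fun x => norm_integral_sub_le
            (Integrable.of_bound hg.aestronglyMeasurable M (ae_of_all _ hgM)) c)
    _ = ∫ y, ‖g y - c‖ ∂ρ.snd :=
        integral_integral_condKernel_eq_integral_snd
          (.of_bound hgc.aestronglyMeasurable _ (ae_of_all _ hgcM))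

lemma integral_integral_norm_condMean_sub_le [CompleteSpace E] {g : Ω → E}
    (hg : StronglyMeasurable g) (hgM : ∀ y, ‖g y‖ ≤ M) :
    ∫ x, ∫ x', ‖condMean ρ g x - condMean ρ g x'‖ ∂ρ.fst ∂ρ.fst ≤
      ∫ y, ∫ y', ‖g y - g y'‖ ∂ρ.snd ∂ρ.snd := by
  set V := condMean ρ g
  have hV := stronglyMeasurable_condMean (ρ := ρ) hg
  have hVg : StronglyMeasurable fun p : α × Ω => ‖V p.1 - g p.2‖ :=
    ((hV.comp_measurable measurable_fst).sub (hg.comp_measurable measurable_snd)).norm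
  have hVgM : ∀ x y, ‖‖V x - g y‖‖ ≤ 2 * M := fun x y => by
    rw [norm_norm]
    exact (norm_sub_le _ _).trans (by linarith [norm_condMean_le (ρ := ρ) hgM x, hgM y])
  calc ∫ x, ∫ x', ‖V x - V x'‖ ∂ρ.fst ∂ρ.fst
      ≤ ∫ x, ∫ y', ‖V x - g y'‖ ∂ρ.snd ∂ρ.fst := by
        refine integral_mono_of_nonneg (ae_of_all _ fun _ => integral_nonneg fun _ => norm_nonneg _)
          (.of_bound hVg.integral_prod_right'.aestronglyMeasurable _
            (ae_of_all _ fun x => norm_integral_le_of_norm_le_const (ae_of_all _ (hVgM x))))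
          (ae_of_all _ fun x => ?_)
        simpa only [norm_sub_rev (V x)] using integral_norm_condMean_sub_le hg hgM (V x)
    _ = ∫ y', ∫ x, ‖V x - g y'‖ ∂ρ.fst ∂ρ.snd :=
        integral_integral_swap (.of_bound hVg.aestronglyMeasurable (2 * M)
          (ae_of_all _ fun p => hVgM p.1 p.2))
    _ ≤ ∫ y', ∫ y, ‖g y - g y'‖ ∂ρ.snd ∂ρ.snd := by
        have hgg : StronglyMeasurable fun p : Ω × Ω => ‖g p.1 - g p.2‖ :=
          ((hg.comp_measurable measurable_fst).sub (hg.comp_measurable measurable_snd)).norm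
        refine integral_mono_of_nonneg
          (ae_of_all _ fun _ => integral_nonneg fun _ => norm_nonneg _)
          (.of_bound hgg.integral_prod_left'.aestronglyMeasurable _ (ae_of_all _ fun y' =>
            norm_integral_le_of_norm_le_const (C := 2 * M) (ae_of_all _ fun y => ?_)))
          (ae_of_all _ fun y' => integral_norm_condMean_sub_le hg hgM (g y'))
        rw [norm_norm]
        exact (norm_sub_le _ _).trans (by linarith [hgM y, hgM y'])
    _ = ∫ y, ∫ y', ‖g y - g y'‖ ∂ρ.snd ∂ρ.snd :=
        integral_congr_ae (ae_of_all _ fun _ =>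
          integral_congr_ae (ae_of_all _ fun _ => norm_sub_rev _ _))

lemma sq_norm_half_smul_add_sub {E : Type*} [NormedAddCommGroup E] [InnerProductSpace ℝ E]
    (a b x : E) :
    ‖(2⁻¹ : ℝ) • (a + b) - x‖ ^ 2 = (‖a - x‖ ^ 2 + ‖b - x‖ ^ 2) / 2 - ‖a - b‖ ^ 2 / 4 := by
  have hpar := parallelogram_law_with_norm ℝ (a - x) (b - x)
  rw [sub_sub_sub_cancel_right] at hpar
  rw [show (2⁻¹ : ℝ) • (a + b) - x = (2⁻¹ : ℝ) • ((a - x) + (b - x)) by module, norm_smul,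
    mul_pow, Real.norm_of_nonneg (by norm_num)]
  linarith

section Functional

variable {d : ℕ} {μ : Measure (Euc d)} {lam M : ℝ} {u v : Euc d → Euc d}

lemma SONJ_congr_ae (h : u =ᵐ[μ] v) : SONJ μ lam u = SONJ μ lam v := by
  unfold SONJ
  congr 1
  · exact integral_congr_ae (h.mono fun x hx => by simp only [hx])
  · congr 1
    refine integral_congr_ae (h.mono fun x hx => integral_congr_ae (h.mono fun y hy => ?_))
    simp only [hx, hy]

lemma IsSONMin.congr_ae (hu : IsSONMin μ lam u) (h : u =ᵐ[μ] v) : IsSONMin μ lam v :=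
  ⟨hu.1.ae_eq h, fun w hw => SONJ_congr_ae h ▸ hu.2 w hw⟩

variable [IsFiniteMeasure μ]

lemma integral_integral_norm_sub_eq (hu : Integrable u μ) :
    ∫ x, ∫ y, ‖u x - u y‖ ∂μ ∂μ = ∫ p, ‖u p.1 - u p.2‖ ∂μ.prod μ :=
  integral_integral ((hu.comp_fst μ).sub (hu.comp_snd μ)).norm

lemma SONJ_half_smul_add_le (hlam : 0 ≤ lam) (hid : MemLp (fun x => x) 2 μ)
    (hu : MemLp u 2 μ) (hv : MemLp v 2 μ) :
    SONJ μ lam (fun x => (2⁻¹ : ℝ) • (u x + v x)) ≤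
      (SONJ μ lam u + SONJ μ lam v) / 2 - (∫ x, ‖u x - v x‖ ^ 2 ∂μ) / 4 := by
  have hm : MemLp (fun x => (2⁻¹ : ℝ) • (u x + v x)) 2 μ := (hu.add hv).const_smul (2⁻¹ : ℝ)
  have hfid : ∫ x, ‖(2⁻¹ : ℝ) • (u x + v x) - x‖ ^ 2 ∂μ =
      (∫ x, ‖u x - x‖ ^ 2 ∂μ + ∫ x, ‖v x - x‖ ^ 2 ∂μ) / 2 - (∫ x, ‖u x - v x‖ ^ 2 ∂μ) / 4 := by
    have iu : Integrable (fun x => ‖u x - x‖ ^ 2) μ := (hu.sub hid).norm.integrable_sq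
    have iv : Integrable (fun x => ‖v x - x‖ ^ 2) μ := (hv.sub hid).norm.integrable_sq
    have iuv : Integrable (fun x => ‖u x - v x‖ ^ 2) μ := (hu.sub hv).norm.integrable_sq
    simp_rw [sq_norm_half_smul_add_sub]
    rw [integral_sub, integral_div, integral_div, integral_add iu iv]
    · exact (iu.add iv).div_const _
    · exact iuv.div_const _
  have hpair : ∫ x, ∫ y, ‖(2⁻¹ : ℝ) • (u x + v x) - (2⁻¹ : ℝ) • (u y + v y)‖ ∂μ ∂μ ≤
      (∫ x, ∫ y, ‖u x - u y‖ ∂μ ∂μ + ∫ x, ∫ y, ‖v x - v y‖ ∂μ ∂μ) / 2 := by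
    have hu1 := hu.integrable one_le_two
    have hv1 := hv.integrable one_le_two
    have hu2 : Integrable (fun p : Euc d × Euc d => ‖u p.1 - u p.2‖) (μ.prod μ) :=
      ((hu1.comp_fst μ).sub (hu1.comp_snd μ)).norm
    have hv2 : Integrable (fun p : Euc d × Euc d => ‖v p.1 - v p.2‖) (μ.prod μ) :=
      ((hv1.comp_fst μ).sub (hv1.comp_snd μ)).norm
    rw [integral_integral_norm_sub_eq (hm.integrable one_le_two),
      integral_integral_norm_sub_eq hu1, integral_integral_norm_sub_eq hv1,
      ← integral_add hu2 hv2, ← integral_div]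
    refine integral_mono_of_nonneg (ae_of_all _ fun _ => norm_nonneg _)
      ((hu2.add hv2).div_const 2) (ae_of_all _ fun p => ?_)
    have := norm_add_le (u p.1 - u p.2) (v p.1 - v p.2)
    dsimp only
    rw [show (2⁻¹ : ℝ) • (u p.1 + v p.1) - (2⁻¹ : ℝ) • (u p.2 + v p.2) =
      (2⁻¹ : ℝ) • ((u p.1 - u p.2) + (v p.1 - v p.2)) by module, norm_smul,
      Real.norm_of_nonneg (by norm_num)]
    linarith
  have := mul_le_mul_of_nonneg_left hpair hlam
  unfold SONJ
  linarith

lemma IsSONMin.integral_norm_sub_sq_le (hlam : 0 ≤ lam) (hid : MemLp (fun x => x) 2 μ)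
    (hu : IsSONMin μ lam u) (hv : MemLp v 2 μ) :
    ∫ x, ‖u x - v x‖ ^ 2 ∂μ ≤ 2 * (SONJ μ lam v - SONJ μ lam u) := by
  have hmid := SONJ_half_smul_add_le hlam hid hu.1 hv
  have hmin := hu.2 (fun x => (2⁻¹ : ℝ) • (u x + v x)) ((hu.1.add hv).const_smul (2⁻¹ : ℝ))
  linarith

lemma memLp_ballProj_comp (hM : 0 ≤ M) (hu : AEStronglyMeasurable u μ) (p : ℝ≥0∞) :
    MemLp (fun x => ballProj M (u x)) p μ :=
  .of_bound ((continuous_ballProj hM).comp_aestronglyMeasurable hu) M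
    (ae_of_all _ fun _ => norm_ballProj_le hM _)

lemma SONJ_ballProj_comp_le (hlam : 0 ≤ lam) (hM : 0 ≤ M) (hμ : ∀ᵐ x ∂μ, ‖x‖ ≤ M)
    (hid : MemLp (fun x => x) 2 μ) (hu : MemLp u 2 μ) :
    SONJ μ lam (fun x => ballProj M (u x)) ≤ SONJ μ lam u := by
  have hu1 := hu.integrable one_le_two
  have hfid : ∫ x, ‖ballProj M (u x) - x‖ ^ 2 ∂μ ≤ ∫ x, ‖u x - x‖ ^ 2 ∂μ :=
    integral_mono_of_nonneg (ae_of_all _ fun _ => by positivity) (hu.sub hid).norm.integrable_sq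
      (hμ.mono fun x hx => pow_le_pow_left₀ (norm_nonneg _) (norm_ballProj_sub_le hM _ hx) 2)
  have hpair : ∫ x, ∫ y, ‖ballProj M (u x) - ballProj M (u y)‖ ∂μ ∂μ ≤
      ∫ x, ∫ y, ‖u x - u y‖ ∂μ ∂μ := by
    rw [integral_integral_norm_sub_eq ((memLp_ballProj_comp hM hu.1 1).integrable le_rfl),
      integral_integral_norm_sub_eq hu1]
    exact integral_mono_of_nonneg (ae_of_all _ fun _ => norm_nonneg _)
      ((hu1.comp_fst μ).sub (hu1.comp_snd μ)).norm
      (ae_of_all _ fun p => norm_ballProj_sub_ballProj_le hM _ _)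
  have := mul_le_mul_of_nonneg_left hpair hlam
  unfold SONJ
  linarith

lemma IsSONMin.ae_norm_le (hlam : 0 ≤ lam) (hM : 0 ≤ M) (hμ : ∀ᵐ x ∂μ, ‖x‖ ≤ M)
    (hu : IsSONMin μ lam u) : ∀ᵐ x ∂μ, ‖u x‖ ≤ M := by
  have hid : MemLp (fun x => x) 2 μ := .of_bound aestronglyMeasurable_id M hμ
  have hv := memLp_ballProj_comp hM hu.1.1 2
  have hdist : ∫ x, ‖u x - ballProj M (u x)‖ ^ 2 ∂μ ≤ 0 :=
    (hu.integral_norm_sub_sq_le hlam hid hv).trans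
      (by linarith [SONJ_ballProj_comp_le hlam hM hμ hid hu.1])
  have hzero := (integral_eq_zero_iff_of_nonneg (fun _ => by positivity)
    (hu.1.sub hv).norm.integrable_sq).1 (hdist.antisymm (integral_nonneg fun _ => by positivity))
  filter_upwards [hzero] with x hx
  have hux : u x = ballProj M (u x) := by simpa [sub_eq_zero] using hx
  exact hux ▸ norm_ballProj_le hM _

lemma IsSONMin.exists_stronglyMeasurable_norm_le_ae_eq (hlam : 0 ≤ lam) (hM : 0 ≤ M)
    (hμ : ∀ᵐ x ∂μ, ‖x‖ ≤ M) (hu : IsSONMin μ lam u) :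
    ∃ g, StronglyMeasurable g ∧ (∀ x, ‖g x‖ ≤ M) ∧ u =ᵐ[μ] g := by
  have hmk := hu.1.1
  refine ⟨fun x => ballProj M (hmk.mk u x),
    (continuous_ballProj hM).comp_stronglyMeasurable hmk.stronglyMeasurable_mk,
    fun x => norm_ballProj_le hM _, ?_⟩
  filter_upwards [hmk.ae_eq_mk, hu.ae_norm_le hlam hM hμ] with x hx hxM
  rw [← hx, ballProj_of_norm_le hxM]

end Functional

lemma sq_norm_sub_le_sq_norm_sub_add {E : Type*} [SeminormedAddCommGroup E] {M : ℝ} {a x y : E}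
    (ha : ‖a‖ ≤ M) (hx : ‖x‖ ≤ M) (hy : ‖y‖ ≤ M) :
    ‖a - x‖ ^ 2 ≤ ‖a - y‖ ^ 2 + 4 * M * ‖x - y‖ := by
  have htri : ‖a - x‖ ≤ ‖a - y‖ + ‖x - y‖ :=
    (norm_sub_le_norm_sub_add_norm_sub a y x).trans_eq (by rw [norm_sub_rev y x])
  have hax : ‖a - x‖ ≤ 2 * M := (norm_sub_le a x).trans (by linarith)
  have hay : ‖a - y‖ ≤ 2 * M := (norm_sub_le a y).trans (by linarith)
  nlinarith [norm_nonneg (a - x), norm_nonneg (a - y), norm_nonneg (x - y)]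

section Transfer

variable {d : ℕ} {ρ : Measure (Euc d × Euc d)} [IsFiniteMeasure ρ] {lam M : ℝ}
  {g : Euc d → Euc d}

lemma integral_norm_condMean_sub_self_sq_le (hρ₁ : ∀ᵐ x ∂ρ.fst, ‖x‖ ≤ M)
    (hρ₂ : ∀ᵐ y ∂ρ.snd, ‖y‖ ≤ M) (hg : StronglyMeasurable g) (hgM : ∀ y, ‖g y‖ ≤ M) :
    ∫ x, ‖condMean ρ g x - x‖ ^ 2 ∂ρ.fst ≤
      ∫ y, ‖g y - y‖ ^ 2 ∂ρ.snd + 4 * M * ∫ p, ‖p.1 - p.2‖ ∂ρ := by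
  have hg_meas : Measurable g := hg.measurable
  have hρ : ∀ᵐ p ∂ρ, ‖p.1‖ ≤ M ∧ ‖p.2‖ ≤ M :=
    (ae_of_ae_map measurable_fst.aemeasurable hρ₁).and
      (ae_of_ae_map measurable_snd.aemeasurable hρ₂)
  have hbound : ∀ᵐ p ∂ρ, ‖g p.2 - p.1‖ ≤ 2 * M ∧ ‖g p.2 - p.2‖ ≤ 2 * M ∧ ‖p.1 - p.2‖ ≤ 2 * M :=
    hρ.mono fun p hp => ⟨(norm_sub_le _ _).trans (by linarith [hgM p.2]),
      (norm_sub_le _ _).trans (by linarith [hgM p.2]), (norm_sub_le _ _).trans (by linarith)⟩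
  have hF : Integrable (fun p : Euc d × Euc d => ‖g p.2 - p.1‖ ^ 2) ρ :=
    .of_bound (by fun_prop : Measurable _).aestronglyMeasurable ((2 * M) ^ 2)
      (hbound.mono fun p hp => by
        rw [norm_pow, norm_norm]; exact pow_le_pow_left₀ (norm_nonneg _) hp.1 2)
  have hG : Integrable (fun p : Euc d × Euc d => ‖g p.2 - p.2‖ ^ 2) ρ :=
    .of_bound (by fun_prop : Measurable _).aestronglyMeasurable ((2 * M) ^ 2)
      (hbound.mono fun p hp => by
        rw [norm_pow, norm_norm]; exact pow_le_pow_left₀ (norm_nonneg _) hp.2.1 2)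
  have hC : Integrable (fun p : Euc d × Euc d => ‖p.1 - p.2‖) ρ :=
    .of_bound (by fun_prop : Measurable _).aestronglyMeasurable (2 * M)
      (hbound.mono fun p hp => by rw [norm_norm]; exact hp.2.2)
  calc ∫ x, ‖condMean ρ g x - x‖ ^ 2 ∂ρ.fst
      ≤ ∫ x, ∫ y, ‖g y - x‖ ^ 2 ∂ρ.condKernel x ∂ρ.fst := by
        refine integral_mono_of_nonneg (ae_of_all _ fun _ => by positivity)
          hF.integral_condKernel (ae_of_all _ fun x => ?_)
        have hgx : ∀ y, ‖g y - x‖ ≤ M + ‖x‖ := fun y =>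
          (norm_sub_le _ _).trans (by linarith [hgM y])
        refine sq_norm_integral_sub_le (.of_bound hg.aestronglyMeasurable M (ae_of_all _ hgM)) x
          (.of_bound (by fun_prop) ((M + ‖x‖) ^ 2) (ae_of_all _ fun y => ?_))
        rw [norm_pow, norm_norm]
        exact pow_le_pow_left₀ (norm_nonneg _) (hgx y) 2
    _ = ∫ p, ‖g p.2 - p.1‖ ^ 2 ∂ρ := Measure.integral_condKernel hF
    _ ≤ ∫ p, (‖g p.2 - p.2‖ ^ 2 + 4 * M * ‖p.1 - p.2‖) ∂ρ :=
        integral_mono_ae hF (hG.add (hC.const_mul _)) (hρ.mono fun p hp =>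
          sq_norm_sub_le_sq_norm_sub_add (hgM p.2) hp.1 hp.2)
    _ = ∫ y, ‖g y - y‖ ^ 2 ∂ρ.snd + 4 * M * ∫ p, ‖p.1 - p.2‖ ∂ρ := by
        rw [integral_add hG (hC.const_mul _), integral_const_mul,
          integral_comp_snd_eq (f := fun y => ‖g y - y‖ ^ 2) (by fun_prop)]

lemma SONJ_condMean_le (hlam : 0 ≤ lam) (hρ₁ : ∀ᵐ x ∂ρ.fst, ‖x‖ ≤ M)
    (hρ₂ : ∀ᵐ y ∂ρ.snd, ‖y‖ ≤ M) (hg : StronglyMeasurable g) (hgM : ∀ y, ‖g y‖ ≤ M) :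
    SONJ ρ.fst lam (condMean ρ g) ≤ SONJ ρ.snd lam g + 4 * M * ∫ p, ‖p.1 - p.2‖ ∂ρ := by
  have hfid := integral_norm_condMean_sub_self_sq_le hρ₁ hρ₂ hg hgM
  have hpair := mul_le_mul_of_nonneg_left
    (integral_integral_norm_condMean_sub_le (ρ := ρ) hg hgM) hlam
  unfold SONJ
  linarith

theorem integral_norm_sub_condMean_sq_le (hlam : 0 ≤ lam) (hρ₁ : ∀ᵐ x ∂ρ.fst, ‖x‖ ≤ M)
    (hρ₂ : ∀ᵐ y ∂ρ.snd, ‖y‖ ≤ M) (hg : StronglyMeasurable g) (hgM : ∀ x, ‖g x‖ ≤ M)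
    (hgmin : IsSONMin ρ.fst lam g) {h : Euc d → Euc d} (hh : StronglyMeasurable h)
    (hhM : ∀ y, ‖h y‖ ≤ M) (hhmin : IsSONMin ρ.snd lam h) :
    ∫ x, ‖g x - condMean ρ h x‖ ^ 2 ∂ρ.fst ≤ 16 * M * ∫ p, ‖p.1 - p.2‖ ∂ρ := by
  have hcost_swap : ∫ p, ‖p.1 - p.2‖ ∂ρ.map Prod.swap = ∫ p, ‖p.1 - p.2‖ ∂ρ := by
    rw [integral_map measurable_swap.aemeasurable (by fun_prop)]
    exact integral_congr_ae (ae_of_all _ fun p => norm_sub_rev _ _)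
  have hforth := SONJ_condMean_le hlam hρ₁ hρ₂ hh hhM
  have hback := SONJ_condMean_le (ρ := ρ.map Prod.swap) hlam (by simpa using hρ₂)
    (by simpa using hρ₁) hg hgM
  rw [Measure.fst_map_swap, Measure.snd_map_swap, hcost_swap] at hback
  have hhle := hhmin.2 _ (memLp_condMean (ρ := ρ.map Prod.swap) hg hgM 2 ρ.snd)
  have hconvex := hgmin.integral_norm_sub_sq_le hlam (.of_bound aestronglyMeasurable_id M hρ₁)
    (memLp_condMean (ρ := ρ) hh hhM 2 ρ.fst)
  linarith

end Transfer

lemma ae_norm_le_of_measure_compl_ball {E : Type*} [SeminormedAddCommGroup E]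
    [MeasurableSpace E] {μ : Measure E} {M : ℝ} (hμ : μ (Metric.ball (0 : E) M)ᶜ = 0) :
    ∀ᵐ x ∂μ, ‖x‖ ≤ M :=
  Filter.mem_of_superset (mem_ae_iff.2 hμ) fun _ hx => (mem_ball_zero_iff.1 hx).le

theorem stmt18_general
    (d : ℕ) (lam : ℝ) (hlam : 0 < lam) (M : ℝ) (hM : 0 < M)
    (μ μt : Measure (Euc d))
    (hμ : μ (Metric.ball (0 : Euc d) M)ᶜ = 0) (hμt : μt (Metric.ball (0 : Euc d) M)ᶜ = 0)
    (u ut : Euc d → Euc d) (hu : IsSONMin μ lam u) (hut : IsSONMin μt lam ut)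
    (π : Measure (Euc d × Euc d)) [IsFiniteMeasure π]
    (hfst : π.fst = μ) (hsnd : π.snd = μt)
    (hopt : ∫⁻ p, edist p.1 p.2 ∂π = W1dist μ μt) :
    ∫ x, ‖u x - ∫ y, ut y ∂(π.condKernel x)‖ ^ 2 ∂μ ≤
      16 * M * (W1dist μ μt).toReal := by
  subst hfst hsnd
  have hμM := ae_norm_le_of_measure_compl_ball hμ
  have hμtM := ae_norm_le_of_measure_compl_ball hμt
  obtain ⟨g, hg, hgM, hug⟩ := hu.exists_stronglyMeasurable_norm_le_ae_eq hlam.le hM.le hμM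
  obtain ⟨h, hh, hhM, huth⟩ := hut.exists_stronglyMeasurable_norm_le_ae_eq hlam.le hM.le hμtM
  have hcost : (W1dist π.fst π.snd).toReal = ∫ p, ‖p.1 - p.2‖ ∂π := by
    rw [← hopt, integral_norm_eq_lintegral_enorm (by fun_prop)]
    simp_rw [edist_eq_enorm_sub]
  calc ∫ x, ‖u x - ∫ y, ut y ∂π.condKernel x‖ ^ 2 ∂π.fst
      = ∫ x, ‖g x - condMean π h x‖ ^ 2 ∂π.fst := by
        refine integral_congr_ae ?_
        filter_upwards [hug, condMean_congr_ae huth] with x hx hx'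
        rw [hx, ← hx', condMean]
    _ ≤ 16 * M * ∫ p, ‖p.1 - p.2‖ ∂π :=
        integral_norm_sub_condMean_sq_le hlam.le hμM hμtM hg hgM (hu.congr_ae hug) hh hhM
          (hut.congr_ae huth)
    _ = 16 * M * (W1dist π.fst π.snd).toReal := by rw [hcost]

/-- **Proposition (`W₁`-stability of the minimizer).**  If `μ, μ̃` are probability
measures supported in `B_M(0)` and `π` is a `1`-optimal transport plan from `μ` to `μ̃`
with disintegration `dπ(x,x̃) = dν(x̃|x) dμ(x)`, then
`∫ |u_{μ,λ}(x) - ∫ u_{μ̃,λ}(x̃) dν(x̃|x)|² dμ(x) ≤ 16 M W₁(μ,μ̃)`. -/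
theorem stmt18
    (d : ℕ) (lam : ℝ) (hlam : 0 < lam) (M : ℝ) (hM : 0 < M)
    (μ μt : Measure (Euc d)) [IsProbabilityMeasure μ] [IsProbabilityMeasure μt]
    (hμ : μ (Metric.ball (0 : Euc d) M)ᶜ = 0) (hμt : μt (Metric.ball (0 : Euc d) M)ᶜ = 0)
    (u ut : Euc d → Euc d) (hu : IsSONMin μ lam u) (hut : IsSONMin μt lam ut)
    (π : Measure (Euc d × Euc d)) [IsFiniteMeasure π]
    (hfst : π.fst = μ) (hsnd : π.snd = μt)
    (hopt : ∫⁻ p, edist p.1 p.2 ∂π = W1dist μ μt) :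
    ∫ x, ‖u x - ∫ y, ut y ∂(π.condKernel x)‖ ^ 2 ∂μ ≤
      16 * M * (W1dist μ μt).toReal :=
  stmt18_general d lam hlam M hM μ μt hμ hμt u ut hu hut π hfst hsnd hopt
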